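/- Let S be a right coherent monoid. Then every almost pure S-act is absolutely pure. -/

import Mathlib

universe u v w

/-- A right `S`-act: a set with an action `A × S → A` with `a·1 = a`, `a·(st) = (a·s)·t`. -/
class RAct (S : Type u) [Monoid S] (A : Type v) where
  act : A → S → A
  act_one : ∀ a : A, act a 1 = a
  act_mul : ∀ (a : A) (s t : S), act a (s * t) = act (act a s) t

infixl:70 " ⊳ " => RAct.act

/-- An `S`-morphism of right `S`-acts. -/
def IsRActHom (S : Type u) [Monoid S] {A : Type v} {B : Type w}
    [RAct S A] [RAct S B] (f : A → B) : Prop :=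
  ∀ (a : A) (s : S), f (a ⊳ s) = f a ⊳ s

/-- The free `S`-act `F_S(X) = X × S`, with `(x,s)·t = (x, st)`. -/
instance freeAct (S : Type u) [Monoid S] (X : Type w) : RAct S (X × S) where
  act p s := (p.1, p.2 * s)
  act_one p := by simp
  act_mul p s t := by simp [mul_assoc]

/-- Disjoint union of two `S`-acts. -/
instance sumAct (S : Type u) [Monoid S] {A : Type v} {B : Type w} [RAct S A] [RAct S B] :
    RAct S (A ⊕ B) where
  act x s := Sum.elim (fun a => Sum.inl (a ⊳ s)) (fun b => Sum.inr (b ⊳ s)) x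
  act_one := by rintro (a | b) <;> simp [RAct.act_one]
  act_mul := by rintro (a | b) s t <;> simp [RAct.act_mul]

/-- Congruence on a right `S`-act. -/
structure IsActCongr (S : Type u) [Monoid S] {A : Type v} [RAct S A]
    (r : A → A → Prop) : Prop where
  refl : ∀ a, r a a
  symm : ∀ {a b}, r a b → r b a
  trans : ∀ {a b c}, r a b → r b c → r a c
  act : ∀ {a b} (s : S), r a b → r (a ⊳ s) (b ⊳ s)

/-- The act congruence generated by a set of pairs `H`. -/
def congGen (S : Type u) [Monoid S] {A : Type v} [RAct S A]
    (H : Set (A × A)) (a b : A) : Prop :=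
  ∀ r : A → A → Prop, IsActCongr S r → (∀ p ∈ H, r p.1 p.2) → r a b

theorem isActCongr_congGen (S : Type u) [Monoid S] {A : Type v} [RAct S A]
    (H : Set (A × A)) : IsActCongr S (congGen S H) where
  refl a := fun _r hr _ => hr.refl a
  symm h := fun r hr hH => hr.symm (h r hr hH)
  trans h1 h2 := fun r hr hH => hr.trans (h1 r hr hH) (h2 r hr hH)
  act s h := fun r hr hH => hr.act s (h r hr hH)

/-- Equations over an `S`-act `A` with variables from `X`:
`xs = yt` (which includes `xs = xt`) or `xs = a`. -/
inductive Eqn (S : Type u) (A : Type v) (X : Type w) where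
  | vv : X → S → X → S → Eqn S A X
  | vc : X → S → A → Eqn S A X

/-- `b : X → C` is a solution of `E` in the act `C`, where `ι : A → C` interprets constants. -/
def IsSolution (S : Type u) [Monoid S] {A : Type v} {X : Type w} {C : Type*}
    [RAct S C] (ι : A → C) (E : Set (Eqn S A X)) (b : X → C) : Prop :=
  (∀ x s y t, Eqn.vv x s y t ∈ E → b x ⊳ s = b y ⊳ t) ∧
  (∀ x s a, Eqn.vc x s a ∈ E → b x ⊳ s = ι a)

/-- A set of equations over `A` is consistent if it has a solution in some act containing `A`. -/
def Consistent (S : Type u) [Monoid S] {A : Type v} {X : Type w} [RAct S A]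
    (E : Set (Eqn S A X)) : Prop :=
  ∃ (B : Type (max u v w)) (_ : RAct S B) (ι : A → B),
    Function.Injective ι ∧ IsRActHom S ι ∧ ∃ b : X → B, IsSolution S ι E b

/-- `A` is `n`-absolutely pure: every finite consistent system of equations over `A`
in at most `n` variables has a solution in `A`. -/
def NPure (S : Type u) [Monoid S] (A : Type v) [RAct S A] (n : ℕ) : Prop :=
  ∀ E : Set (Eqn S A (Fin n)), E.Finite → Consistent S E →
    ∃ c : Fin n → A, IsSolution S id E c

/-- Almost pure: 1-absolutely pure. -/
def AlmostPure (S : Type u) [Monoid S] (A : Type v) [RAct S A] : Prop :=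
  NPure S A 1

/-- Absolutely pure: `n`-absolutely pure for every `n`. -/
def AbsolutelyPure (S : Type u) [Monoid S] (A : Type v) [RAct S A] : Prop :=
  ∀ n : ℕ, NPure S A n

/-- The pairs `H(Σ)` in the free act coming from constant-free equations of `E`. -/
def Hcf (S : Type u) [Monoid S] {A : Type v} {X : Type w}
    (E : Set (Eqn S A X)) : Set ((X × S) × (X × S)) :=
  {p | ∃ x u y v, Eqn.vv x u y v ∈ E ∧ p = ((x, u), (y, v))}

/-- The pairs `H(Σ) ∪ K(Σ)` on the disjoint union `A ⊔ F_S(X)`. -/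
def HK (S : Type u) [Monoid S] {A : Type v} {X : Type w}
    (E : Set (Eqn S A X)) : Set ((A ⊕ X × S) × (A ⊕ X × S)) :=
  {p | (∃ x u y v, Eqn.vv x u y v ∈ E ∧ p = (Sum.inr (x, u), Sum.inr (y, v))) ∨
       (∃ x s a, Eqn.vc x s a ∈ E ∧ p = (Sum.inr (x, s), Sum.inl a))}

/-- Quotient of an act by a generated congruence. -/
instance quotAct (S : Type u) [Monoid S] {A : Type v} [RAct S A] (H : Set (A × A)) :
    RAct S (Quot (congGen S H)) where
  act q s := Quot.map (fun a => a ⊳ s) (fun _a _b h => (isActCongr_congGen S H).act s h) q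
  act_one := by
    rintro ⟨a⟩
    show Quot.mk _ (a ⊳ (1 : S)) = Quot.mk _ a
    rw [RAct.act_one]
  act_mul := by
    rintro ⟨a⟩ s t
    show Quot.mk _ (a ⊳ (s * t)) = Quot.mk _ (a ⊳ s ⊳ t)
    rw [RAct.act_mul]

/-- The canonical extension `A(Σ) = (A ⊔ F_S(X)) / κ_Σ`. -/
abbrev ActExt (S : Type u) [Monoid S] {A : Type v} {X : Type w} [RAct S A]
    (E : Set (Eqn S A X)) : Type (max u v w) :=
  Quot (congGen S (HK S E))

/-- The natural map `ν_Σ : A → A(Σ)`. -/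
def extOfBase (S : Type u) [Monoid S] {A : Type v} {X : Type w} [RAct S A]
    (E : Set (Eqn S A X)) (a : A) : ActExt S E :=
  Quot.mk _ (Sum.inl a)

/-- A finitely generated `S`-act. -/
def IsFG (S : Type u) [Monoid S] (A : Type v) [RAct S A] : Prop :=
  ∃ T : Finset A, ∀ a : A, ∃ t ∈ T, ∃ s : S, a = t ⊳ s

/-- A monogenic (cyclic) `S`-act. -/
def Monogenic (S : Type u) [Monoid S] (C : Type v) [RAct S C] : Prop :=
  ∃ c : C, ∀ y : C, ∃ s : S, y = c ⊳ s

/-- `A` embeds into `C` as an `S`-act. -/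
def ActEmbeds (S : Type u) [Monoid S] (A : Type v) (C : Type w) [RAct S A] [RAct S C] : Prop :=
  ∃ ι : A → C, IsRActHom S ι ∧ Function.Injective ι

/-- A finitely presented `S`-act: isomorphic to `F_S(X)/ρ` with `X` finite and
`ρ` a finitely generated congruence. -/
def IsFP (S : Type u) [Monoid S] (A : Type v) [RAct S A] : Prop :=
  ∃ (n : ℕ) (H : Set ((Fin n × S) × (Fin n × S))), H.Finite ∧
    ∃ φ : Fin n × S → A, IsRActHom S φ ∧ Function.Surjective φ ∧
      ∀ p q : Fin n × S, φ p = φ q ↔ congGen S H p q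

/-- A right coherent monoid. -/
def RightCoherent (S : Type u) [Monoid S] : Prop :=
  ∀ (A B : Type u) (_ : RAct S A) (_ : RAct S B) (ι : B → A),
    IsRActHom S ι → Function.Injective ι → IsFP S A → IsFG S B → IsFP S B

/-- The fem-property: every finitely generated `S`-act embeds into a monogenic act. -/
def FemProperty (S : Type u) [Monoid S] : Prop :=
  ∀ (A : Type u) (_ : RAct S A), IsFG S A → ∃ (C : Type u) (_ : RAct S C),
    Monogenic S C ∧ ActEmbeds S A C

/-- A subact of an `S`-act. -/
structure Subact (S : Type u) [Monoid S] (B : Type v) [RAct S B] where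
  carrier : Set B
  closed : ∀ b ∈ carrier, ∀ s : S, b ⊳ s ∈ carrier

instance subAct (S : Type u) [Monoid S] {B : Type v} [RAct S B] (T : Subact S B) :
    RAct S T.carrier where
  act a s := ⟨a.1 ⊳ s, T.closed a.1 a.2 s⟩
  act_one a := Subtype.ext (RAct.act_one a.1)
  act_mul a s t := Subtype.ext (RAct.act_mul a.1 s t)


def BuiltFrom (S : Type u) [Monoid S] {A B : Type v} [RAct S A] [RAct S B]
    (ι : A → B) (P : ℕ → Prop) : Prop :=
  IsRActHom S ι ∧ Function.Injective ι ∧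
  ∃ (ξ : Ordinal.{v}) (C : Ordinal.{v} → Subact S B),
    (C 0).carrier = Set.range ι ∧
    (∀ i j : Ordinal.{v}, i ≤ j → (C i).carrier ⊆ (C j).carrier) ∧
    (C ξ).carrier = Set.univ ∧
    (∀ ζ : Ordinal.{v}, ζ ≤ ξ → Order.IsSuccLimit ζ → (C ζ).carrier = ⋃ i ∈ Set.Iio ζ, (C i).carrier) ∧
    (∀ i : Ordinal.{v}, i < ξ → ∃ m : ℕ, P m ∧
      (∃ E : Set (Eqn S (↥(C i).carrier) (Fin m)), Consistent S E ∧
        (∃ e : ActExt S E → B, IsRActHom S e ∧ Function.Injective e ∧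
          Set.range e = (C (i + 1)).carrier ∧
          (∀ d : ↥(C i).carrier, e (extOfBase S E d) = d.1))))


/-! Induction on the number of variables. Let `E` be a finite system in `N + 1` variables with a
solution in an extension `B` of `A`. Let `Q` be the act presented by the variables and the
constant-free equations of `E`, and `T ⊆ Q` the subact generated by the last variable and the
elements `x s` for the equations `x s = a` of `E`. Being finitely generated, `T` is finitely
presented by right coherence; the relations of a presentation, read in `B`, form a finite
consistent system in one variable, and a solution in `A` yields a homomorphism `ψ : T → A` with
`x s ↦ a`. In the pushout of `Q` along `ψ`, `E` is solved with the last variable in `A`, say `c`,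
so substituting `c` for it leaves a consistent system in `N` variables. -/

open Function

section Congruence

variable {S : Type u} [Monoid S] {A : Type v} [RAct S A] {H : Set (A × A)}

theorem congGen_of_mem {a b : A} (h : (a, b) ∈ H) : congGen S H a b :=
  fun _ _ hH => hH _ h

theorem quot_mk_eq_iff {a b : A} :
    Quot.mk (congGen S H) a = Quot.mk (congGen S H) b ↔ congGen S H a b := by
  have hr := isActCongr_congGen S H
  rw [Quot.eq, Equivalence.eqvGen_iff ⟨hr.refl, hr.symm, hr.trans⟩]

theorem eq_of_congGen {D : Sort*} (f : A → D)
    (hf : ∀ a b (s : S), f a = f b → f (a ⊳ s) = f (b ⊳ s))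
    (hH : ∀ p ∈ H, f p.1 = f p.2) {a b : A} (h : congGen S H a b) : f a = f b :=
  h (fun x y => f x = f y) ⟨fun _ => rfl, Eq.symm, Eq.trans, fun s => hf _ _ s⟩ hH

theorem IsRActHom.eq_of_congGen {D : Type w} [RAct S D] {f : A → D} (hf : IsRActHom S f)
    (hH : ∀ p ∈ H, f p.1 = f p.2) {a b : A} (h : congGen S H a b) : f a = f b :=
  _root_.eq_of_congGen f (fun a b s hab => by rw [hf, hf, hab]) hH h

end Congruence

section Presentation

variable {S : Type u} [Monoid S]

theorem isFP_quot {n : ℕ} {H : Set ((Fin n × S) × (Fin n × S))} (hH : H.Finite) :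
    IsFP S (Quot (congGen S H)) :=
  ⟨n, H, hH, Quot.mk _, fun _ _ => rfl, Quot.mk_surjective, fun _ _ => quot_mk_eq_iff⟩

theorem isFG_of_generates {P : Type v} [RAct S P] {K : Type w} [Finite K] (g : K → P)
    (hg : ∀ p, ∃ k, ∃ s : S, p = g k ⊳ s) : IsFG S P := by
  classical
  have := Fintype.ofFinite K
  refine ⟨Finset.univ.image g, fun p => ?_⟩
  obtain ⟨k, s, rfl⟩ := hg p
  exact ⟨g k, Finset.mem_image_of_mem g (Finset.mem_univ k), s, rfl⟩

theorem exists_hom_of_presentation {X : Type*} {P : Type v} {D : Type w} [RAct S P] [RAct S D]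
    {H : Set ((X × S) × (X × S))} {φ : X × S → P} (hφ : IsRActHom S φ) (hsurj : Surjective φ)
    (hker : ∀ p q, φ p = φ q ↔ congGen S H p q) {θ : X × S → D} (hθ : IsRActHom S θ)
    (hθH : ∀ pq ∈ H, θ pq.1 = θ pq.2) :
    ∃ ψ : P → D, IsRActHom S ψ ∧ ∀ p, ψ (φ p) = θ p := by
  have hθφ : ∀ p, θ (surjInv hsurj (φ p)) = θ p := fun p =>
    hθ.eq_of_congGen hθH ((hker _ _).1 (surjInv_eq hsurj _))
  refine ⟨fun x => θ (surjInv hsurj x), fun x s => ?_, hθφ⟩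
  obtain ⟨p, rfl⟩ := hsurj x
  show θ _ = θ _ ⊳ s
  rw [← hφ, hθφ, hθφ, hθ]

end Presentation

section Terms

variable {S : Type u} {A : Type v} {X : Type w}

/-- A term over `A` in the variables `X` is `inl (x, s)`, standing for `x s`, or `inr a`,
standing for the constant `a`. -/
def Eqn.lhs : Eqn S A X → (X × S) ⊕ A
  | .vv x u _ _ => .inl (x, u)
  | .vc x s _ => .inl (x, s)

def Eqn.rhs : Eqn S A X → (X × S) ⊕ A
  | .vv _ _ y v => .inl (y, v)
  | .vc _ _ a => .inr a

def eqnsOfTerms : (X × S) ⊕ A → (X × S) ⊕ A → Set (Eqn S A X)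
  | .inl (x, s), .inl (y, t) => {.vv x s y t}
  | .inl (x, s), .inr a => {.vc x s a}
  | .inr a, .inl (y, t) => {.vc y t a}
  | .inr _, .inr _ => ∅

theorem finite_eqnsOfTerms (t t' : (X × S) ⊕ A) : (eqnsOfTerms t t').Finite := by
  rcases t with ⟨x, s⟩ | a <;> rcases t' with ⟨y, t⟩ | a' <;> simp [eqnsOfTerms]

variable [Monoid S] {C : Type*} [RAct S C]

variable (S) in
def termVal (ι : A → C) (b : X → C) : (X × S) ⊕ A → C :=
  Sum.elim (fun p : X × S => b p.1 ⊳ p.2) ι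

theorem isRActHom_termVal [RAct S A] {ι : A → C} (hι : IsRActHom S ι) (b : X → C) :
    IsRActHom S (termVal S ι b) := by
  rintro (⟨x, s⟩ | a) t
  · exact RAct.act_mul (b x) s t
  · exact hι a t

variable {ι : A → C} {b : X → C} {E F : Set (Eqn S A X)}

theorem isSolution_iff :
    IsSolution S ι E b ↔ ∀ e ∈ E, termVal S ι b e.lhs = termVal S ι b e.rhs := by
  refine ⟨fun h e he => ?_, fun h => ⟨fun x s y t he => h _ he, fun x s a he => h _ he⟩⟩
  cases e with
  | vv x u y v => exact h.1 x u y v he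
  | vc x s a => exact h.2 x s a he

theorem isSolution_union :
    IsSolution S ι (E ∪ F) b ↔ IsSolution S ι E b ∧ IsSolution S ι F b := by
  simp only [isSolution_iff, Set.mem_union, or_imp, forall_and]

theorem isSolution_iUnion {K : Sort*} {E : K → Set (Eqn S A X)} :
    IsSolution S ι (⋃ k, E k) b ↔ ∀ k, IsSolution S ι (E k) b := by
  simp only [isSolution_iff, Set.mem_iUnion, forall_exists_index]
  exact forall_comm

theorem isSolution_eqnsOfTerms {t t' : (X × S) ⊕ A}
    (h : termVal S ι b t = termVal S ι b t') : IsSolution S ι (eqnsOfTerms t t') b := by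
  rw [isSolution_iff]
  rcases t with ⟨x, s⟩ | a <;> rcases t' with ⟨y, t⟩ | a'
  · rintro _ rfl; exact h
  · rintro _ rfl; exact h
  · rintro _ rfl; exact h.symm
  · rintro _ ⟨⟩

/-- `eqnsOfTerms` omits equations between two constants; these are recovered from the extension
through the injectivity of `ι`. -/
theorem termVal_eq_of_isSolution [RAct S A] (hι : Injective ι) {c : X → A}
    {t t' : (X × S) ⊕ A} (hb : termVal S ι b t = termVal S ι b t')
    (hc : IsSolution S id (eqnsOfTerms t t') c) : termVal S id c t = termVal S id c t' := by
  rw [isSolution_iff] at hc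
  rcases t with ⟨x, s⟩ | a <;> rcases t' with ⟨y, t⟩ | a'
  · exact hc _ rfl
  · exact hc _ rfl
  · exact (hc _ rfl).symm
  · exact hι hb

end Terms

section Substitution

variable {S : Type u} [Monoid S] {A : Type v} [RAct S A] {N : ℕ}

def substTerm (c : A) : (Fin (N + 1) × S) ⊕ A → (Fin N × S) ⊕ A
  | .inl (x, s) => Fin.lastCases (.inr (c ⊳ s)) (fun y => .inl (y, s)) x
  | .inr a => .inr a

def substEqns (c : A) (E : Set (Eqn S A (Fin (N + 1)))) : Set (Eqn S A (Fin N)) :=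
  ⋃ e ∈ E, eqnsOfTerms (substTerm c e.lhs) (substTerm c e.rhs)

theorem Set.Finite.substEqns {E : Set (Eqn S A (Fin (N + 1)))} (hE : E.Finite) (c : A) :
    (_root_.substEqns c E).Finite :=
  hE.biUnion fun _ _ => finite_eqnsOfTerms _ _

variable {C : Type*} [RAct S C] {ι : A → C} {E : Set (Eqn S A (Fin (N + 1)))} {c : A}

theorem termVal_substTerm (hι : IsRActHom S ι) (b : Fin N → C) (t : (Fin (N + 1) × S) ⊕ A) :
    termVal S ι b (substTerm c t) = termVal S ι (Fin.lastCases (ι c) b) t := by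
  rcases t with ⟨x, s⟩ | a
  · induction x using Fin.lastCases <;> simp [substTerm, termVal, hι c]
  · rfl

theorem isSolution_substEqns (hι : IsRActHom S ι) {b : Fin N → C}
    (h : IsSolution S ι E (Fin.lastCases (ι c) b)) : IsSolution S ι (substEqns c E) b := by
  simp only [substEqns, isSolution_iUnion]
  intro e he
  apply isSolution_eqnsOfTerms
  rw [termVal_substTerm hι, termVal_substTerm hι]
  exact isSolution_iff.1 h e he

theorem isSolution_lastCases_of_substEqns (hι : Injective ι) (hιhom : IsRActHom S ι)
    {z : Fin N → C} (hz : IsSolution S ι E (Fin.lastCases (ι c) z)) {b : Fin N → A}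
    (hb : IsSolution S id (substEqns c E) b) : IsSolution S id E (Fin.lastCases c b) := by
  simp only [substEqns, isSolution_iUnion] at hb
  refine isSolution_iff.2 fun e he => ?_
  have hsubst : ∀ t, termVal S id (Fin.lastCases c b) t = termVal S id b (substTerm c t) :=
    fun t => (termVal_substTerm (fun _ _ => rfl) b t).symm
  rw [hsubst, hsubst]
  refine termVal_eq_of_isSolution (b := z) hι ?_ (hb e he)
  rw [termVal_substTerm hιhom, termVal_substTerm hιhom]
  exact isSolution_iff.1 hz e he

end Substitution

section Pushout

variable {S : Type u} [Monoid S] {B : Type v} {A : Type w} [RAct S B]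
  (T : Subact S B) (f : T.carrier → A)

/-- Generators of the pushout `B ⊔_T A` of the inclusion `T ⊆ B` along `f`. -/
def pushGen : Set ((B ⊕ A) × (B ⊕ A)) :=
  {p | ∃ d : T.carrier, p = (.inl d.1, .inr (f d))}

open Classical in
/-- An invariant of the pushout congruence (`pushVal_eq_of_congGen`) that separates the points
of `A`. -/
noncomputable def pushVal : B ⊕ A → B ⊕ A
  | .inl b => if h : b ∈ T.carrier then .inr (f ⟨b, h⟩) else .inl b
  | .inr a => .inr a

variable {T f}

theorem pushVal_inl_of_mem {b : B} (hb : b ∈ T.carrier) :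
    pushVal T f (.inl b) = .inr (f ⟨b, hb⟩) :=
  dif_pos hb

theorem pushVal_inl_of_notMem {b : B} (hb : b ∉ T.carrier) : pushVal T f (.inl b) = .inl b :=
  dif_neg hb

variable [RAct S A]

theorem pushVal_act (hf : IsRActHom S f) (x : B ⊕ A) (s : S) :
    pushVal T f (x ⊳ s) = pushVal T f (pushVal T f x ⊳ s) := by
  rcases x with b | a
  · by_cases hb : b ∈ T.carrier
    · rw [pushVal_inl_of_mem hb]
      exact (pushVal_inl_of_mem (T.closed b hb s)).trans (congrArg Sum.inr (hf ⟨b, hb⟩ s))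
    · rw [pushVal_inl_of_notMem hb]
  · rfl

theorem pushVal_eq_of_congGen (hf : IsRActHom S f) {x y : B ⊕ A}
    (h : congGen S (pushGen T f) x y) : pushVal T f x = pushVal T f y := by
  refine eq_of_congGen _ (fun x y s hxy => by rw [pushVal_act hf, hxy, ← pushVal_act hf]) ?_ h
  rintro _ ⟨d, rfl⟩
  exact pushVal_inl_of_mem d.2

theorem injective_pushout_inr (hf : IsRActHom S f) :
    Injective fun a : A => Quot.mk (congGen S (pushGen T f)) (.inr a) := fun _ _ h =>
  Sum.inr_injective
    (congrArg (Quot.lift (pushVal T f) fun _ _ => pushVal_eq_of_congGen hf) h)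

theorem pushout_inl_eq_inr (d : T.carrier) :
    Quot.mk (congGen S (pushGen T f)) (.inl d.1) = Quot.mk _ (.inr (f d)) :=
  Quot.sound (congGen_of_mem ⟨d, rfl⟩)

theorem isSolution_pushout {X : Type*} {E : Set (Eqn S A X)} {b : X → B}
    (hvv : ∀ x u y v, Eqn.vv x u y v ∈ E → b x ⊳ u = b y ⊳ v)
    (hvc : ∀ x s a, Eqn.vc x s a ∈ E → ∃ d : T.carrier, d.1 = b x ⊳ s ∧ f d = a) :
    IsSolution S (fun a => Quot.mk (congGen S (pushGen T f)) (.inr a)) E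
      (fun x => Quot.mk _ (.inl (b x))) := by
  refine ⟨fun x u y v he =>
    congrArg (fun q => Quot.mk (congGen S (pushGen T f)) (Sum.inl q)) (hvv x u y v he),
    fun x s a he => ?_⟩
  obtain ⟨d, hd, rfl⟩ := hvc x s a he
  show Quot.mk _ (Sum.inl (b x ⊳ s)) = _
  rw [← hd]
  exact pushout_inl_eq_inr d

end Pushout

theorem NPure.exists_hom_of_isFP {S : Type u} [Monoid S] {A : Type v} [RAct S A] {n : ℕ}
    (hA : NPure S A n) {P : Type w} [RAct S P] (hP : IsFP S P) {K : Type*} [Finite K]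
    (g : K → P) (hg : ∀ p, ∃ k, ∃ s : S, p = g k ⊳ s) (τ : K → (Fin n × S) ⊕ A)
    {C : Type (max u v)} [RAct S C] {ι : A → C} (hι : Injective ι) (hιhom : IsRActHom S ι)
    {α : P → C} (hα : IsRActHom S α) {z : Fin n → C}
    (hαg : ∀ k, α (g k) = termVal S ι z (τ k)) :
    ∃ (ψ : P → A) (c : Fin n → A), IsRActHom S ψ ∧ ∀ k, ψ (g k) = termVal S id c (τ k) := by
  obtain ⟨m, H, hH, φ, hφ, hsurj, hker⟩ := hP
  choose κ w hκw using fun i => hg (φ (i, 1))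
  choose π hπ using fun k => hsurj (g k)
  let term : Fin m × S → (Fin n × S) ⊕ A := fun p => τ (κ p.1) ⊳ w p.1 ⊳ p.2
  have hterm : IsRActHom S term := fun p s => RAct.act_mul _ p.2 s
  have hαφ : ∀ p, α (φ p) = termVal S ι z (term p) := by
    intro p
    have hp : φ p = g (κ p.1) ⊳ w p.1 ⊳ p.2 := by
      rw [← hκw, ← hφ]
      exact congrArg φ (Prod.ext rfl (one_mul p.2).symm)
    rw [hp, hα, hα, hαg, isRActHom_termVal hιhom, isRActHom_termVal hιhom]
  let sys := (⋃ pq ∈ H, eqnsOfTerms (term pq.1) (term pq.2)) ∪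
    ⋃ k, eqnsOfTerms (term (π k)) (τ k)
  have hsys : sys.Finite :=
    (hH.biUnion fun _ _ => finite_eqnsOfTerms _ _).union
      (Set.finite_iUnion fun _ => finite_eqnsOfTerms _ _)
  have hz : IsSolution S ι sys z := by
    simp only [sys, isSolution_union, isSolution_iUnion]
    refine ⟨fun pq hpq => isSolution_eqnsOfTerms ?_, fun k => isSolution_eqnsOfTerms ?_⟩
    · rw [← hαφ, ← hαφ, (hker _ _).2 (congGen_of_mem hpq)]
    · rw [← hαφ, hπ, hαg]
  obtain ⟨c, hc⟩ := hA sys hsys ⟨C, _, ι, hι, hιhom, z, hz⟩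
  simp only [sys, isSolution_union, isSolution_iUnion] at hc
  obtain ⟨ψ, hψ, hψφ⟩ := exists_hom_of_presentation hφ hsurj hker
    (θ := fun p => termVal S id c (term p))
    (fun p s => by beta_reduce; rw [hterm, isRActHom_termVal (fun _ _ => rfl)])
    (fun pq hpq => termVal_eq_of_isSolution hι (by rw [← hαφ, ← hαφ,
      (hker _ _).2 (congGen_of_mem hpq)]) (hc.1 pq hpq))
  refine ⟨ψ, c, hψ, fun k => ?_⟩
  rw [← hπ k, hψφ]
  exact termVal_eq_of_isSolution hι (by rw [← hαφ, hπ, hαg]) (hc.2 k)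

section Coherent

variable {S : Type u} [Monoid S]

variable (S) in
def Subact.span {B : Type v} [RAct S B] {K : Type w} (g : K → B) : Subact S B where
  carrier := {b | ∃ k, ∃ s : S, b = g k ⊳ s}
  closed := by
    rintro _ ⟨k, s, rfl⟩ t
    exact ⟨k, s * t, (RAct.act_mul _ _ _).symm⟩

variable {A : Type v} {X : Type w} {E : Set (Eqn S A X)}

theorem Set.Finite.hcf (hE : E.Finite) : (Hcf S E).Finite := by
  refine (hE.preimage (f := fun p : (X × S) × (X × S) => Eqn.vv p.1.1 p.1.2 p.2.1 p.2.2)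
    fun p _ q _ h => ?_).subset ?_
  · obtain ⟨h₁, h₂, h₃, h₄⟩ := Eqn.vv.inj h
    exact Prod.ext (Prod.ext h₁ h₂) (Prod.ext h₃ h₄)
  · rintro _ ⟨x, u, y, v, he, rfl⟩
    exact he

theorem IsSolution.eq_of_congGen_hcf {C : Type*} [RAct S C] {ι : A → C} {b : X → C}
    (hb : IsSolution S ι E b) {p q : X × S} (h : congGen S (Hcf S E) p q) :
    b p.1 ⊳ p.2 = b q.1 ⊳ q.2 :=
  IsRActHom.eq_of_congGen (f := fun p : X × S => b p.1 ⊳ p.2) (fun p s => RAct.act_mul _ _ _)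
    (by rintro _ ⟨x, u, y, v, he, rfl⟩; exact hb.1 x u y v he) h

variable [RAct S A]

theorem RightCoherent.exists_solution_lastCases (hS : RightCoherent S) (hA : AlmostPure S A)
    {N : ℕ} {E : Set (Eqn S A (Fin (N + 1)))} (hE : E.Finite) (hcons : Consistent S E) :
    ∃ (C : Type (max u v)) (_ : RAct S C) (ι : A → C) (c : A) (z : Fin N → C),
      Injective ι ∧ IsRActHom S ι ∧ IsSolution S ι E (Fin.lastCases (ι c) z) := by
  obtain ⟨B, _, ι, hι, hιhom, b, hb⟩ := hcons
  let mk : Fin (N + 1) × S → Quot (congGen S (Hcf S E)) := Quot.mk _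
  have hmk : ∀ x s, mk (x, 1) ⊳ s = mk (x, s) := fun x s => congrArg mk (Prod.ext rfl (one_mul s))
  let J := (fun j : Fin (N + 1) × S × A => Eqn.vc j.1 j.2.1 j.2.2) ⁻¹' E
  have : Finite J := (hE.preimage fun _ _ _ _ h => by
    obtain ⟨h₁, h₂, h₃⟩ := Eqn.vc.inj h
    exact Prod.ext h₁ (Prod.ext h₂ h₃)).to_subtype
  let g : Option J → Quot (congGen S (Hcf S E)) :=
    fun o => o.elim (mk (Fin.last N, 1)) fun j => mk (j.1.1, j.1.2.1)
  let T := Subact.span S g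
  let gT : Option J → T.carrier := fun o => ⟨g o, o, 1, (RAct.act_one _).symm⟩
  have hgT : ∀ p, ∃ o, ∃ s : S, p = gT o ⊳ s := by
    rintro ⟨_, o, s, rfl⟩
    exact ⟨o, s, rfl⟩
  have hT : IsFP S T.carrier := hS _ _ _ _ Subtype.val (fun _ _ => rfl) Subtype.val_injective
    (isFP_quot hE.hcf) (isFG_of_generates gT hgT)
  let α : T.carrier → B := fun q =>
    Quot.lift (fun p => b p.1 ⊳ p.2) (fun _ _ => hb.eq_of_congGen_hcf) q.1
  have hα : IsRActHom S α := by
    rintro ⟨⟨p⟩, _⟩ s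
    exact RAct.act_mul _ _ _
  obtain ⟨ψ, c, hψ, hψg⟩ := NPure.exists_hom_of_isFP hA hT gT hgT
    (fun o => o.elim (.inl (0, 1)) fun j => .inr j.1.2.2) hι hιhom hα
    (z := fun _ => b (Fin.last N)) (by rintro (_ | j); exacts [rfl, hb.2 _ _ _ j.2])
  have hsol := isSolution_pushout (E := E) (b := fun x => mk (x, 1)) (f := ψ)
    (fun x u y v he => by rw [hmk, hmk]; exact Quot.sound (congGen_of_mem ⟨x, u, y, v, he, rfl⟩))
    (fun x s a he => ⟨gT (some ⟨(x, s, a), he⟩), (hmk x s).symm, hψg _⟩)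
  refine ⟨_, inferInstance, _, c 0, fun x => Quot.mk _ (.inl (mk (x.castSucc, 1))),
    injective_pushout_inr hψ, fun _ _ => rfl, ?_⟩
  convert hsol using 1
  funext x
  induction x using Fin.lastCases with
  | last =>
    have hc : ψ (gT none) = c 0 := (hψg none).trans (RAct.act_one _)
    rw [Fin.lastCases_last, ← hc]
    exact (pushout_inl_eq_inr (gT none)).symm
  | cast x => simp

theorem nPure_zero : NPure S A 0 :=
  fun _ _ _ => ⟨Fin.elim0, fun x => x.elim0, fun x => x.elim0⟩

theorem RightCoherent.nPure_succ (hS : RightCoherent S) (hA : AlmostPure S A) {N : ℕ}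
    (ih : NPure S A N) : NPure S A (N + 1) := by
  intro E hE hcons
  obtain ⟨C, _, ι, c, z, hι, hιhom, hz⟩ := hS.exists_solution_lastCases hA hE hcons
  obtain ⟨b, hb⟩ := ih _ (hE.substEqns c) ⟨C, _, ι, hι, hιhom, z, isSolution_substEqns hιhom hz⟩
  exact ⟨Fin.lastCases c b, isSolution_lastCases_of_substEqns hι hιhom hz hb⟩

end Coherent

/-- Over a right coherent monoid, every almost pure act is absolutely pure. -/
theorem coherent_almostPure_absolutelyPure (S : Type u) [Monoid S]
    (hS : RightCoherent S) (A : Type v) [RAct S A]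
    (hA : AlmostPure S A) : AbsolutelyPure S A := by
  intro n
  induction n with
  | zero => exact nPure_zero
  | succ N ih => exact hS.nPure_succ hA ih
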